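/- arXiv:1803.01718 — 2 statements merged into one kernel-verified Lean document; each statement's English description precedes it below -/
import Mathlib

section
/- Let E and F be Banach spaces, 1 ≤ p < ∞ and 1 ≤ q ≤ r < ∞, and T : E → F a bounded linear operator. Then (T(x_j))_{j=1}^∞ is absolutely r-summable in F for every mid (q,p)-summable sequence (x_j)_{j=1}^∞ in E if and only if there is a constant A > 0 such that (∑_{j=1}^k ‖T(x_j)‖^r)^{1/r} ≤ A ‖(x_1,…,x_k,0,0,…)‖_{q,p} for every k ∈ ℕ and all x_1,…,x_k ∈ E. -/
open NormedSpace MeasureTheory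

noncomputable section

/-- A sequence `x` in `E` is weakly `p`-summable: `∑_j |φ(x_j)|^p < ∞` for all `φ ∈ E*`. -/
def WeaklySummable (𝕜 : Type*) [RCLike 𝕜] {E : Type*} [NormedAddCommGroup E]
    [NormedSpace 𝕜 E] (p : ℝ) (x : ℕ → E) : Prop :=
  ∀ φ : StrongDual 𝕜 E, Summable fun j => ‖φ (x j)‖ ^ p

/-- The weak `p`-norm of a sequence: `sup_{φ ∈ B_{E*}} (∑_j |φ(x_j)|^p)^{1/p}`. -/
def weakNorm (𝕜 : Type*) [RCLike 𝕜] {E : Type*} [NormedAddCommGroup E]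
    [NormedSpace 𝕜 E] (p : ℝ) (x : ℕ → E) : ℝ :=
  ⨆ φ : {φ : StrongDual 𝕜 E // ‖φ‖ ≤ 1}, (∑' j, ‖φ.1 (x j)‖ ^ p) ^ (1 / p)

/-- A sequence `x` in `E` is mid `(q,p)`-summable:
`∑_j (∑_n |x_n^*(x_j)|^p)^{q/p} < ∞` for every weakly `p`-summable sequence `(x_n^*)` in `E*`. -/
def MidSummable (𝕜 : Type*) [RCLike 𝕜] {E : Type*} [NormedAddCommGroup E]
    [NormedSpace 𝕜 E] (q p : ℝ) (x : ℕ → E) : Prop :=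
  ∀ xs : ℕ → StrongDual 𝕜 E, WeaklySummable 𝕜 p xs →
    Summable fun j => (∑' n, ‖xs n (x j)‖ ^ p) ^ (q / p)

/-- The mid `(q,p)`-norm:
`sup over (x_n^*) in the closed unit ball of ℓ_p^w(E*)` of
`(∑_j (∑_n |x_n^*(x_j)|^p)^{q/p})^{1/q}`. -/
def midNorm (𝕜 : Type*) [RCLike 𝕜] {E : Type*} [NormedAddCommGroup E]
    [NormedSpace 𝕜 E] (q p : ℝ) (x : ℕ → E) : ℝ :=
  ⨆ xs : {xs : ℕ → StrongDual 𝕜 E // WeaklySummable 𝕜 p xs ∧ weakNorm 𝕜 p xs ≤ 1},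
    (∑' j, (∑' n, ‖xs.1 n (x j)‖ ^ p) ^ (q / p)) ^ (1 / q)

/-- `u : X → Y` is absolutely `p`-summing: there is `C > 0` with
`(∑_{j=1}^k ‖u(x_j)‖^p)^{1/p} ≤ C sup_{φ ∈ B_{X*}} (∑_{j=1}^k |φ(x_j)|^p)^{1/p}`
for all finite families. -/
def AbsolutelySumming (𝕜 : Type*) [RCLike 𝕜] {X Y : Type*} [NormedAddCommGroup X]
    [NormedSpace 𝕜 X] [NormedAddCommGroup Y] [NormedSpace 𝕜 Y] (p : ℝ)
    (u : X →L[𝕜] Y) : Prop :=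
  ∃ C > 0, ∀ (k : ℕ) (z : Fin k → X),
    (∑ j, ‖u (z j)‖ ^ p) ^ (1 / p) ≤
      C * ⨆ φ : {φ : StrongDual 𝕜 X // ‖φ‖ ≤ 1}, (∑ j, ‖φ.1 (z j)‖ ^ p) ^ (1 / p)

/-- The `p`-summing norm `π_p(u)`: the least admissible constant. -/
def piNorm (𝕜 : Type*) [RCLike 𝕜] {X Y : Type*} [NormedAddCommGroup X]
    [NormedSpace 𝕜 X] [NormedAddCommGroup Y] [NormedSpace 𝕜 Y] (p : ℝ)
    (u : X →L[𝕜] Y) : ℝ :=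
  sInf {C : ℝ | 0 < C ∧ ∀ (k : ℕ) (z : Fin k → X),
    (∑ j, ‖u (z j)‖ ^ p) ^ (1 / p) ≤
      C * ⨆ φ : {φ : StrongDual 𝕜 X // ‖φ‖ ≤ 1}, (∑ j, ‖φ.1 (z j)‖ ^ p) ^ (1 / p)}

/-!
Both directions are gluing arguments along the enumeration `Nat.unpair` of `ℕ × ℕ`.
By the closed graph theorem every weakly `p`-summable sequence is a scalar multiple of one in
the unit ball of `ℓ_p^w(E*)`, so enumerating finitely supported blocks `v_i` gives a mid
`(q,p)`-summable sequence as soon as `∑_i ‖v_i‖_{q,p}^q < ∞`. If no constant `A` exists, blocks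
with `∑_m ‖T v_{i,m}‖^r = 1` and `‖v_i‖_{q,p} ≤ 2^{-i}` glue to such a sequence, whose image is not
absolutely `r`-summable. Conversely, the truncations of a mid summable sequence have bounded mid
norms: otherwise norming sequences for ever longer truncations, weighted by `2^{-i}`, glue to one
weakly `p`-summable sequence against which the series defining mid summability diverges.
The inequality then bounds the partial sums of `∑_j ‖T x_j‖^r`.
-/

open Function

lemma Real.rpow_mul_rpow_div {a b : ℝ} (ha : 0 ≤ a) (hb : 0 ≤ b) {p : ℝ} (hp : p ≠ 0) (q : ℝ) :
    (a ^ p * b) ^ (q / p) = a ^ q * b ^ (q / p) := by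
  rw [Real.mul_rpow (by positivity) hb, ← Real.rpow_mul ha, mul_div_cancel₀ q hp]

lemma inv_two_pow_rpow_le {s : ℝ} (hs : 1 ≤ s) (i : ℕ) : (((2 : ℝ) ^ i)⁻¹) ^ s ≤ (1 / 2) ^ i := by
  rw [one_div, inv_pow]
  exact Real.rpow_le_self_of_le_one (by positivity)
    (inv_le_one_of_one_le₀ (one_le_pow₀ one_le_two)) hs

lemma tsum_norm_smul_rpow {𝕜 V : Type*} [RCLike 𝕜] [NormedAddCommGroup V] [NormedSpace 𝕜 V]
    (c : 𝕜) (a : ℕ → V) (p : ℝ) : ∑' n, ‖c • a n‖ ^ p = ‖c‖ ^ p * ∑' n, ‖a n‖ ^ p := by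
  simp only [norm_smul, Real.mul_rpow (norm_nonneg _) (norm_nonneg _), tsum_mul_left]

lemma summable_uncurry_comp_unpair_iff {f : ℕ → ℕ → ℝ} (hf : ∀ i m, 0 ≤ f i m) :
    Summable (uncurry f ∘ Nat.unpair) ↔ (∀ i, Summable (f i)) ∧ Summable fun i => ∑' m, f i m := by
  rw [← Nat.pairEquiv_symm_apply, Nat.pairEquiv.symm.summable_iff]
  exact summable_prod_of_nonneg fun im => hf im.1 im.2

lemma tsum_le_tsum_uncurry_comp_unpair {f : ℕ → ℕ → ℝ} (hf : ∀ i m, 0 ≤ f i m)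
    (hs : Summable (uncurry f ∘ Nat.unpair)) (i : ℕ) :
    ∑' m, f i m ≤ ∑' n, (uncurry f ∘ Nat.unpair) n := by
  have hinj : Injective (Nat.pair i) := fun _ _ h => (Nat.pair_eq_pair.1 h).2
  simpa [comp_def, Nat.unpair_pair] using
    tsum_comp_le_tsum_of_inj hs (fun n => hf _ _) hinj

lemma tsum_dite_lt_eq_sum {E M : Type*} [Zero E] [AddCommMonoid M] [TopologicalSpace M] {k : ℕ}
    (x : Fin k → E) {f : E → M} (hf : f 0 = 0) :
    ∑' m, f (if h : m < k then x ⟨m, h⟩ else 0) = ∑ j, f (x j) := by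
  rw [tsum_eq_sum (s := Finset.range k) fun m hm => by simp [Finset.mem_range.not.1 hm, hf],
    ← Fin.sum_univ_eq_sum_range (fun m => f (if h : m < k then x ⟨m, h⟩ else 0))]
  simp

section WeakSummability

variable {𝕜 X : Type*} [RCLike 𝕜] [NormedAddCommGroup X] [NormedSpace 𝕜 X] {p : ℝ} {x : ℕ → X}

lemma norm_apply_smul_rpow (Φ : StrongDual 𝕜 X) (c : 𝕜) (v : X) (p : ℝ) :
    ‖Φ (c • v)‖ ^ p = ‖c‖ ^ p * ‖Φ v‖ ^ p := by
  rw [map_smul, norm_smul, Real.mul_rpow (norm_nonneg _) (norm_nonneg _)]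

lemma WeaklySummable.smul (hx : WeaklySummable 𝕜 p x) (c : 𝕜) : WeaklySummable 𝕜 p (c • x) :=
  fun Φ => by simpa only [Pi.smul_apply, norm_apply_smul_rpow] using (hx Φ).mul_left (‖c‖ ^ p)

/-- The closed graph theorem applied to `Φ ↦ (Φ (x n))ₙ : X* → ℓ_p`. -/
lemma WeaklySummable.exists_tsum_le (hp : 1 ≤ p) (hx : WeaklySummable 𝕜 p x) :
    ∃ C, 0 ≤ C ∧ ∀ Φ : StrongDual 𝕜 X, ∑' n, ‖Φ (x n)‖ ^ p ≤ C * ‖Φ‖ ^ p := by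
  have hp0 : 0 < p := zero_lt_one.trans_le hp
  have : Fact (1 ≤ ENNReal.ofReal p) := ⟨by simpa using ENNReal.ofReal_le_ofReal hp⟩
  have hpe : (ENNReal.ofReal p).toReal = p := ENNReal.toReal_ofReal hp0.le
  let L : StrongDual 𝕜 X →ₗ[𝕜] lp (fun _ : ℕ => 𝕜) (ENNReal.ofReal p) :=
    { toFun := fun Φ => ⟨fun n => Φ (x n), memℓp_gen (by rw [hpe]; exact hx Φ)⟩
      map_add' := fun _ _ => rfl
      map_smul' := fun _ _ => rfl }
  have hL : Continuous L := L.continuous_of_seq_closed_graph fun u Φ y hu hy => by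
    ext n
    exact tendsto_nhds_unique (((lp.lipschitzWith_one_eval _ n).continuous.tendsto y).comp hy)
      (((ContinuousLinearMap.apply 𝕜 𝕜 (x n)).continuous.tendsto Φ).comp hu)
  obtain ⟨C, hC0, hC⟩ := SemilinearMapClass.bound_of_continuous L hL
  refine ⟨C ^ p, by positivity, fun Φ => ?_⟩
  have hLΦ := lp.norm_rpow_eq_tsum (by rw [hpe]; exact hp0) (L Φ)
  rw [hpe] at hLΦ
  calc ∑' n, ‖Φ (x n)‖ ^ p = ‖L Φ‖ ^ p := by rw [hLΦ]; rfl
    _ ≤ (C * ‖Φ‖) ^ p := by gcongr; exact hC Φ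
    _ = C ^ p * ‖Φ‖ ^ p := Real.mul_rpow hC0.le (norm_nonneg _)

lemma WeaklySummable.tsum_le_of_weakNorm_le_one (hp : 1 ≤ p) (hx : WeaklySummable 𝕜 p x)
    (hn : weakNorm 𝕜 p x ≤ 1) (Φ : StrongDual 𝕜 X) : ∑' n, ‖Φ (x n)‖ ^ p ≤ ‖Φ‖ ^ p := by
  have hp0 : 0 < p := zero_lt_one.trans_le hp
  obtain ⟨C, hC0, hC⟩ := hx.exists_tsum_le hp
  have hbdd : BddAbove (Set.range fun φ : {φ : StrongDual 𝕜 X // ‖φ‖ ≤ 1} =>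
      (∑' n, ‖φ.1 (x n)‖ ^ p) ^ (1 / p)) := by
    refine ⟨C ^ (1 / p), Set.forall_mem_range.2 fun φ => ?_⟩
    gcongr
    calc ∑' n, ‖φ.1 (x n)‖ ^ p ≤ C * ‖φ.1‖ ^ p := hC φ.1
      _ ≤ C := mul_le_of_le_one_right hC0 (Real.rpow_le_one (norm_nonneg _) φ.2 hp0.le)
  have hball : ∀ Ψ : StrongDual 𝕜 X, ‖Ψ‖ ≤ 1 → ∑' n, ‖Ψ (x n)‖ ^ p ≤ 1 := fun Ψ hΨ => by
    have h := (le_ciSup hbdd ⟨Ψ, hΨ⟩).trans hn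
    rwa [one_div, Real.rpow_inv_le_iff_of_pos (by positivity) zero_le_one hp0,
      Real.one_rpow] at h
  rcases eq_or_ne Φ 0 with rfl | hΦ
  · simp [Real.zero_rpow hp0.ne']
  have hΦ0 : 0 < ‖Φ‖ := norm_pos_iff.2 hΦ
  have hnorm : ‖((‖Φ‖ : 𝕜))⁻¹‖ = ‖Φ‖⁻¹ := by simp
  have h := hball (((‖Φ‖ : 𝕜))⁻¹ • Φ) (by rw [norm_smul, hnorm, inv_mul_cancel₀ hΦ0.ne'])
  simp only [smul_apply, tsum_norm_smul_rpow, hnorm, Real.inv_rpow hΦ0.le] at h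
  rwa [inv_mul_le_iff₀ (by positivity), mul_one] at h

lemma weakNorm_le_one_of_forall_tsum_le (hp : 0 < p)
    (h : ∀ Φ : StrongDual 𝕜 X, ∑' n, ‖Φ (x n)‖ ^ p ≤ ‖Φ‖ ^ p) : weakNorm 𝕜 p x ≤ 1 := by
  have : Nonempty {φ : StrongDual 𝕜 X // ‖φ‖ ≤ 1} := ⟨⟨0, by simp⟩⟩
  refine ciSup_le fun φ => ?_
  calc (∑' n, ‖φ.1 (x n)‖ ^ p) ^ (1 / p) ≤ (‖φ.1‖ ^ p) ^ (1 / p) := by gcongr; exact h φ.1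
    _ = ‖φ.1‖ := by rw [one_div, Real.rpow_rpow_inv (norm_nonneg _) hp.ne']
    _ ≤ 1 := φ.2

lemma WeaklySummable.exists_eq_smul (hp : 1 ≤ p) (hx : WeaklySummable 𝕜 p x) :
    ∃ (d : 𝕜) (z : ℕ → X), x = d • z ∧ WeaklySummable 𝕜 p z ∧ weakNorm 𝕜 p z ≤ 1 := by
  have hp0 : 0 < p := zero_lt_one.trans_le hp
  obtain ⟨C, hC0, hC⟩ := hx.exists_tsum_le hp
  set d : ℝ := (C + 1) ^ p⁻¹
  have hd : 0 < d := by positivity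
  have hdp : d ^ p = C + 1 := Real.rpow_inv_rpow (by positivity) hp0.ne'
  refine ⟨d, (d : 𝕜)⁻¹ • x, (smul_inv_smul₀ (by exact_mod_cast hd.ne') x).symm, hx.smul _,
    weakNorm_le_one_of_forall_tsum_le hp0 fun Φ => ?_⟩
  simp only [Pi.smul_apply, norm_apply_smul_rpow, tsum_mul_left, norm_inv, RCLike.norm_ofReal,
    abs_of_pos hd, Real.inv_rpow hd.le, hdp]
  rw [inv_mul_le_iff₀ (by positivity)]
  exact (hC Φ).trans (by gcongr; linarith)

lemma weaklySummable_uncurry_comp_unpair (hp : 1 ≤ p) {xs : ℕ → ℕ → X}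
    (h₁ : ∀ i, WeaklySummable 𝕜 p (xs i)) (h₂ : ∀ i, weakNorm 𝕜 p (xs i) ≤ 1) {c : ℕ → 𝕜}
    (hc : Summable fun i => ‖c i‖ ^ p) :
    WeaklySummable 𝕜 p (uncurry (fun i => c i • xs i) ∘ Nat.unpair) := fun Φ => by
  refine (summable_uncurry_comp_unpair_iff (f := fun i m => ‖Φ (c i • xs i m)‖ ^ p)
    fun _ _ => by positivity).2
    ⟨fun i => (h₁ i).smul (c i) Φ, .of_nonneg_of_le (fun i => by positivity) (fun i => ?_)
      (hc.mul_right (‖Φ‖ ^ p))⟩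
  simp only [norm_apply_smul_rpow, tsum_mul_left]
  gcongr
  exact (h₁ i).tsum_le_of_weakNorm_le_one hp (h₂ i) Φ

end WeakSummability

section MidNorm

variable {𝕜 E : Type*} [RCLike 𝕜] [NormedAddCommGroup E] [NormedSpace 𝕜 E] {p q : ℝ}

def midTerm (q p : ℝ) (xs : ℕ → StrongDual 𝕜 E) (y : E) : ℝ :=
  (∑' n, ‖xs n y‖ ^ p) ^ (q / p)

lemma midTerm_nonneg (xs : ℕ → StrongDual 𝕜 E) (y : E) : 0 ≤ midTerm q p xs y := by
  unfold midTerm; positivity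

lemma midTerm_zero (hp : p ≠ 0) (hq : q ≠ 0) (xs : ℕ → StrongDual 𝕜 E) :
    midTerm q p xs (0 : E) = 0 := by
  simp [midTerm, Real.zero_rpow hp, Real.zero_rpow (div_ne_zero hq hp)]

lemma midTerm_smul_left (hp : p ≠ 0) (c : 𝕜) (xs : ℕ → StrongDual 𝕜 E) (y : E) :
    midTerm q p (c • xs) y = ‖c‖ ^ q * midTerm q p xs y := by
  simp only [midTerm, Pi.smul_apply, smul_apply, tsum_norm_smul_rpow]
  exact Real.rpow_mul_rpow_div (norm_nonneg _) (by positivity) hp q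

lemma midTerm_smul_right (hp : p ≠ 0) (xs : ℕ → StrongDual 𝕜 E) (c : 𝕜) (y : E) :
    midTerm q p xs (c • y) = ‖c‖ ^ q * midTerm q p xs y := by
  simp only [midTerm, norm_apply_smul_rpow, tsum_mul_left]
  exact Real.rpow_mul_rpow_div (norm_nonneg _) (by positivity) hp q

lemma WeaklySummable.summable_apply {xs : ℕ → StrongDual 𝕜 E} (h : WeaklySummable 𝕜 p xs)
    (y : E) : Summable fun n => ‖xs n y‖ ^ p :=
  h (inclusionInDoubleDual 𝕜 E y)

lemma midTerm_le_norm_rpow (hp : 1 ≤ p) (hq : 0 ≤ q) {xs : ℕ → StrongDual 𝕜 E}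
    (h₁ : WeaklySummable 𝕜 p xs) (h₂ : weakNorm 𝕜 p xs ≤ 1) (y : E) :
    midTerm q p xs y ≤ ‖y‖ ^ q := by
  have hp0 : 0 < p := zero_lt_one.trans_le hp
  have h := h₁.tsum_le_of_weakNorm_le_one hp h₂ (inclusionInDoubleDual 𝕜 E y)
  calc midTerm q p xs y ≤ (‖inclusionInDoubleDual 𝕜 E y‖ ^ p) ^ (q / p) := by
        unfold midTerm; gcongr; exact h
    _ ≤ (‖y‖ ^ p) ^ (q / p) := by gcongr; exact double_dual_bound 𝕜 E y
    _ = ‖y‖ ^ q := by rw [← Real.rpow_mul (norm_nonneg _), mul_div_cancel₀ q hp0.ne']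

lemma le_midTerm_uncurry_comp_unpair (hp : 0 ≤ p) (hq : 0 ≤ q) {v : ℕ → ℕ → StrongDual 𝕜 E}
    (hv : WeaklySummable 𝕜 p (uncurry v ∘ Nat.unpair)) (i : ℕ) (y : E) :
    midTerm q p (v i) y ≤ midTerm q p (uncurry v ∘ Nat.unpair) y := by
  refine Real.rpow_le_rpow (by positivity) ?_ (by positivity)
  exact tsum_le_tsum_uncurry_comp_unpair (f := fun i m => ‖v i m y‖ ^ p)
    (fun _ _ => by positivity) (hv.summable_apply y) i

lemma midNorm_nonneg (x : ℕ → E) : 0 ≤ midNorm 𝕜 q p x :=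
  Real.iSup_nonneg fun xs => by positivity

lemma midNorm_smul (hp : p ≠ 0) (hq : q ≠ 0) (c : 𝕜) (x : ℕ → E) :
    midNorm 𝕜 q p (c • x) = ‖c‖ * midNorm 𝕜 q p x := by
  rw [midNorm, midNorm, Real.mul_iSup_of_nonneg (norm_nonneg c)]
  congr 1 with xs
  change (∑' j, midTerm q p xs.1 (c • x j)) ^ (1 / q) =
    ‖c‖ * (∑' j, midTerm q p xs.1 (x j)) ^ (1 / q)
  simp only [midTerm_smul_right hp, tsum_mul_left]
  rw [Real.mul_rpow (by positivity) (tsum_nonneg fun _ => midTerm_nonneg _ _),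
    ← Real.rpow_mul (norm_nonneg _), mul_one_div_cancel hq, Real.rpow_one]

lemma tsum_midTerm_le_midNorm_rpow (hp : 1 ≤ p) (hq : 0 < q) {x : ℕ → E} {k : ℕ}
    (hx : ∀ j, k ≤ j → x j = 0) {xs : ℕ → StrongDual 𝕜 E} (h₁ : WeaklySummable 𝕜 p xs)
    (h₂ : weakNorm 𝕜 p xs ≤ 1) :
    ∑' j, midTerm q p xs (x j) ≤ midNorm 𝕜 q p x ^ q := by
  have hfin : ∀ ys : ℕ → StrongDual 𝕜 E, WeaklySummable 𝕜 p ys → weakNorm 𝕜 p ys ≤ 1 →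
      ∑' j, midTerm q p ys (x j) ≤ ∑ j ∈ Finset.range k, ‖x j‖ ^ q := fun ys h₁ h₂ => by
    rw [tsum_eq_sum (s := Finset.range k) fun j hj => by
      rw [hx j (by simpa using hj), midTerm_zero (by linarith) hq.ne']]
    exact Finset.sum_le_sum fun j _ => midTerm_le_norm_rpow hp hq.le h₁ h₂ (x j)
  have hbdd : BddAbove (Set.range fun ys : {ys : ℕ → StrongDual 𝕜 E //
      WeaklySummable 𝕜 p ys ∧ weakNorm 𝕜 p ys ≤ 1} =>
      (∑' j, midTerm q p ys.1 (x j)) ^ (1 / q)) := by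
    refine ⟨(∑ j ∈ Finset.range k, ‖x j‖ ^ q) ^ (1 / q), Set.forall_mem_range.2 fun ys => ?_⟩
    gcongr
    · exact tsum_nonneg fun _ => midTerm_nonneg _ _
    · exact hfin ys.1 ys.2.1 ys.2.2
  have h : (∑' j, midTerm q p xs (x j)) ^ (1 / q) ≤ midNorm 𝕜 q p x :=
    le_ciSup hbdd ⟨xs, h₁, h₂⟩
  rwa [one_div, Real.rpow_inv_le_iff_of_pos (tsum_nonneg fun _ => midTerm_nonneg _ _)
    (midNorm_nonneg x) hq] at h

lemma exists_lt_tsum_midTerm (hp : 0 < p) (hq : 0 < q) {x : ℕ → E} {t : ℝ} (ht : 0 ≤ t)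
    (h : t < midNorm 𝕜 q p x) :
    ∃ xs : ℕ → StrongDual 𝕜 E, WeaklySummable 𝕜 p xs ∧ weakNorm 𝕜 p xs ≤ 1 ∧
      t ^ q < ∑' j, midTerm q p xs (x j) := by
  have : Nonempty {xs : ℕ → StrongDual 𝕜 E // WeaklySummable 𝕜 p xs ∧ weakNorm 𝕜 p xs ≤ 1} :=
    ⟨⟨0, fun Φ => by simp [Real.zero_rpow hp.ne'],
      weakNorm_le_one_of_forall_tsum_le hp fun Φ => by simp [Real.zero_rpow hp.ne']; positivity⟩⟩
  obtain ⟨⟨xs, h₁, h₂⟩, hlt⟩ := exists_lt_of_lt_ciSup h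
  exact ⟨xs, h₁, h₂, (Real.lt_rpow_inv_iff_of_pos ht (tsum_nonneg fun _ => midTerm_nonneg _ _)
    hq).1 (by rwa [← one_div])⟩

end MidNorm

section Gluing

variable {𝕜 E : Type*} [RCLike 𝕜] [NormedAddCommGroup E] [NormedSpace 𝕜 E] {p q : ℝ}

lemma midSummable_uncurry_comp_unpair (hp : 1 ≤ p) (hq : 0 < q) {v : ℕ → ℕ → E} {k : ℕ → ℕ}
    (hv : ∀ i m, k i ≤ m → v i m = 0) (hs : Summable fun i => midNorm 𝕜 q p (v i) ^ q) :
    MidSummable 𝕜 q p (uncurry v ∘ Nat.unpair) := by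
  intro ys hys
  obtain ⟨d, zs, rfl, hz₁, hz₂⟩ := hys.exists_eq_smul hp
  have hp0 : p ≠ 0 := by linarith
  change Summable fun j => midTerm q p (d • zs) _
  simp only [midTerm_smul_left hp0]
  refine .mul_left _ ((summable_uncurry_comp_unpair_iff (f := fun i m => midTerm q p zs (v i m))
    fun _ _ => midTerm_nonneg _ _).2 ⟨fun i => ?_, ?_⟩)
  · refine summable_of_ne_finset_zero (s := Finset.range (k i)) fun m hm => ?_
    rw [hv i m (by simpa using hm), midTerm_zero hp0 hq.ne']
  · exact .of_nonneg_of_le (fun i => tsum_nonneg fun _ => midTerm_nonneg _ _)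
      (fun i => tsum_midTerm_le_midNorm_rpow hp hq (hv i) hz₁ hz₂) hs

lemma MidSummable.exists_midNorm_trunc_le (hp : 1 ≤ p) (hq : 1 ≤ q) {x : ℕ → E}
    (hx : MidSummable 𝕜 q p x) :
    ∃ M, ∀ k, midNorm 𝕜 q p (fun j => if j < k then x j else 0) ≤ M := by
  have hp0 : 0 < p := by linarith
  have hq0 : 0 < q := by linarith
  by_contra! h
  -- With weights `2^{-i}` the `i`-th norming sequence contributes `(2^{-i} 4^i)^q ≥ 2^i`.
  choose k hk using fun i : ℕ => h (4 ^ i)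
  choose xs h₁ h₂ hlt using fun i => exists_lt_tsum_midTerm hp0 hq0 (by positivity) (hk i)
  set c : ℕ → 𝕜 := fun i => ((2 : 𝕜) ^ i)⁻¹
  have hc : ∀ i, ‖c i‖ = ((2 : ℝ) ^ i)⁻¹ := fun i => by simp [c]
  have hcp : Summable fun i => ‖c i‖ ^ p :=
    .of_nonneg_of_le (fun _ => by positivity) (fun i => hc i ▸ inv_two_pow_rpow_le hp i)
      summable_geometric_two
  set ys := uncurry (fun i => c i • xs i) ∘ Nat.unpair
  have hys : WeaklySummable 𝕜 p ys := weaklySummable_uncurry_comp_unpair hp h₁ h₂ hcp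
  have hsum : Summable fun j => midTerm q p ys (x j) := hx ys hys
  have hbig : ∀ i, (2 : ℝ) ^ i ≤ ∑' j, midTerm q p ys (x j) := fun i => calc
    (2 : ℝ) ^ i ≤ ((2 : ℝ) ^ i) ^ q := Real.self_le_rpow_of_one_le (one_le_pow₀ one_le_two) hq
    _ = ‖c i‖ ^ q * ((4 : ℝ) ^ i) ^ q := by
      rw [hc, ← Real.mul_rpow (by positivity) (by positivity)]
      congr 1
      rw [show (4 : ℝ) = 2 * 2 by norm_num, mul_pow]
      field_simp
    _ ≤ ‖c i‖ ^ q * ∑' j, midTerm q p (xs i) (if j < k i then x j else 0) := by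
      gcongr; exact (hlt i).le
    _ = ∑' j, midTerm q p (c i • xs i) (if j < k i then x j else 0) := by
      simp only [midTerm_smul_left hp0.ne', tsum_mul_left]
    _ ≤ ∑' j, midTerm q p ys (x j) := by
      refine Summable.tsum_le_tsum (fun j => ?_) ?_ hsum
      · split_ifs
        · exact le_midTerm_uncurry_comp_unpair hp0.le hq0.le hys i (x j)
        · rw [midTerm_zero hp0.ne' hq0.ne']; exact midTerm_nonneg _ _
      · refine summable_of_ne_finset_zero (s := Finset.range (k i)) fun j hj => ?_
        rw [if_neg (by simpa using hj), midTerm_zero hp0.ne' hq0.ne']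
  obtain ⟨n, hn⟩ := exists_nat_gt (∑' j, midTerm q p ys (x j))
  exact (hbig n).not_gt (hn.trans (by exact_mod_cast Nat.lt_two_pow_self))

end Gluing

section Summing

variable {𝕜 E F : Type*} [RCLike 𝕜] [NormedAddCommGroup E] [NormedSpace 𝕜 E]
  [NormedAddCommGroup F] [NormedSpace 𝕜 F] {p q r : ℝ}

lemma summable_of_forall_le_mul_midNorm (hp : 1 ≤ p) (hq : 1 ≤ q) (hr : 0 < r) (T : E →L[𝕜] F)
    {A : ℝ} (hA : 0 ≤ A)
    (h : ∀ (k : ℕ) (x : Fin k → E), (∑ j, ‖T (x j)‖ ^ r) ^ (1 / r) ≤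
      A * midNorm 𝕜 q p fun j => if h : j < k then x ⟨j, h⟩ else 0)
    {x : ℕ → E} (hx : MidSummable 𝕜 q p x) : Summable fun j => ‖T (x j)‖ ^ r := by
  obtain ⟨M, hM⟩ := hx.exists_midNorm_trunc_le hp hq
  refine summable_of_sum_range_le (c := (A * M) ^ r) (fun j => by positivity) fun k => ?_
  have hk : (∑ j : Fin k, ‖T (x j)‖ ^ r) ^ (1 / r) ≤ A * M :=
    (h k fun j => x j).trans (mul_le_mul_of_nonneg_left (hM k) hA)
  rwa [Fin.sum_univ_eq_sum_range (fun j => ‖T (x j)‖ ^ r), one_div,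
    Real.rpow_inv_le_iff_of_pos (by positivity) ((by positivity : (0 : ℝ) ≤ _).trans hk) hr] at hk

lemma exists_le_mul_midNorm_of_summable (hp : 1 ≤ p) (hq : 1 ≤ q) (hr : 0 < r) (T : E →L[𝕜] F)
    (h : ∀ x : ℕ → E, MidSummable 𝕜 q p x → Summable fun j => ‖T (x j)‖ ^ r) :
    ∃ A > 0, ∀ (k : ℕ) (x : Fin k → E), (∑ j, ‖T (x j)‖ ^ r) ^ (1 / r) ≤
      A * midNorm 𝕜 q p fun j => if h : j < k then x ⟨j, h⟩ else 0 := by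
  have hp0 : p ≠ 0 := by linarith
  have hq0 : q ≠ 0 := by linarith
  by_contra! hA
  choose k xx hxx using fun i : ℕ => hA (2 ^ i) (by positivity)
  set L : ℕ → ℝ := fun i => (∑ j, ‖T (xx i j)‖ ^ r) ^ (1 / r)
  set w : ℕ → ℕ → E := fun i j => if h : j < k i then xx i ⟨j, h⟩ else 0
  have hL : ∀ i, 0 < L i := fun i =>
    (mul_nonneg (by positivity) (midNorm_nonneg _)).trans_lt (hxx i)
  have hLinv : ∀ i, ‖((L i : 𝕜))⁻¹‖ = (L i)⁻¹ := fun i => by simp [(hL i).le]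
  set v : ℕ → ℕ → E := fun i => ((L i : 𝕜))⁻¹ • w i
  have hv : ∀ i m, k i ≤ m → v i m = 0 := fun i m hm => by simp [v, w, not_lt.2 hm]
  have hvT : ∀ i, ∑' m, ‖T (v i m)‖ ^ r = 1 := fun i => by
    have hw : ∑' m, ‖T (w i m)‖ ^ r = L i ^ r := by
      change _ = ((∑ j, ‖T (xx i j)‖ ^ r) ^ (1 / r)) ^ r
      rw [one_div, Real.rpow_inv_rpow (by positivity) hr.ne']
      exact tsum_dite_lt_eq_sum (xx i) (f := fun y => ‖T y‖ ^ r) (by simp [Real.zero_rpow hr.ne'])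
    calc ∑' m, ‖T (v i m)‖ ^ r = (L i)⁻¹ ^ r * L i ^ r := by
          simp only [v, Pi.smul_apply, map_smul, tsum_norm_smul_rpow, hLinv, hw]
      _ = 1 := by
          rw [← Real.mul_rpow (inv_nonneg.2 (hL i).le) (hL i).le,
            inv_mul_cancel₀ (hL i).ne', Real.one_rpow]
  have hvmid : ∀ i, midNorm 𝕜 q p (v i) ^ q ≤ (1 / 2) ^ i := fun i => by
    have hlt : midNorm 𝕜 q p (v i) < ((2 : ℝ) ^ i)⁻¹ := by
      rw [midNorm_smul hp0 hq0, hLinv, inv_mul_lt_iff₀ (hL i), ← div_eq_mul_inv,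
        lt_div_iff₀ (by positivity), mul_comm]
      exact hxx i
    exact (Real.rpow_le_rpow (midNorm_nonneg _) hlt.le (by linarith)).trans
      (inv_two_pow_rpow_le hq i)
  have hTv := h _ (midSummable_uncurry_comp_unpair hp (by linarith) hv <|
    .of_nonneg_of_le (fun _ => Real.rpow_nonneg (midNorm_nonneg _) q) hvmid summable_geometric_two)
  have hrows := ((summable_uncurry_comp_unpair_iff (f := fun i m => ‖T (v i m)‖ ^ r)
    fun _ _ => by positivity).1 hTv).2
  simp only [hvT, summable_const_iff] at hrows
  exact one_ne_zero hrows

end Summing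

variable {𝕜 E F : Type*}

theorem stmt14_general [RCLike 𝕜] [NormedAddCommGroup E] [NormedSpace 𝕜 E]
    [NormedAddCommGroup F] [NormedSpace 𝕜 F]
    (p q r : ℝ) (hp : 1 ≤ p) (hq : 1 ≤ q) (hqr : q ≤ r) (T : E →L[𝕜] F) :
    (∀ x : ℕ → E, MidSummable 𝕜 q p x → Summable fun j => ‖T (x j)‖ ^ r) ↔
      ∃ A > 0, ∀ (k : ℕ) (x : Fin k → E),
        (∑ j, ‖T (x j)‖ ^ r) ^ (1 / r) ≤
          A * midNorm 𝕜 q p fun j => if h : j < k then x ⟨j, h⟩ else 0 := by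
  have hr : 0 < r := by linarith
  exact ⟨exists_le_mul_midNorm_of_summable hp hq hr T,
    fun ⟨A, hA, h⟩ _ hx => summable_of_forall_le_mul_midNorm hp hq hr T hA.le h hx⟩

/-- for `q ≤ r`, `T` sends mid `(q,p)`-summable sequences to absolutely
`r`-summable sequences iff there is `A > 0` with
`(∑_{j=1}^k ‖T(x_j)‖^r)^{1/r} ≤ A ‖(x_1,…,x_k,0,0,…)‖_{q,p}` for all finite families. -/
theorem stmt14 [RCLike 𝕜] [NormedAddCommGroup E] [NormedSpace 𝕜 E] [CompleteSpace E]
    [NormedAddCommGroup F] [NormedSpace 𝕜 F] [CompleteSpace F]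
    (p q r : ℝ) (hp : 1 ≤ p) (hq : 1 ≤ q) (hqr : q ≤ r) (T : E →L[𝕜] F) :
    (∀ x : ℕ → E, MidSummable 𝕜 q p x → Summable fun j => ‖T (x j)‖ ^ r) ↔
      ∃ A > 0, ∀ (k : ℕ) (x : Fin k → E),
        (∑ j, ‖T (x j)‖ ^ r) ^ (1 / r) ≤
          A * midNorm 𝕜 q p fun j => if h : j < k then x ⟨j, h⟩ else 0 :=
  stmt14_general p q r hp hq hqr T
end
end

section
/- Let E and F be Banach spaces, 1 ≤ p ≤ s < ∞, and T : E → F a bounded linear operator whose adjoint T* : F* → E* is absolutely p-summing. Then for every weakly s-summable sequence (x_j)_{j=1}^∞ in E and every weakly p-summable sequence (y_n*)_{n=1}^∞ in F*, one has (∑_{j=1}^∞ (∑_{n=1}^∞ |y_n*(T(x_j))|^p)^{s/p})^{1/s} ≤ π_p(T*) · ‖(x_j)‖_{w,s} · ‖(y_n*)‖_{w,p}; in particular (T(x_j))_{j=1}^∞ is mid (s,p)-summable in F whenever (x_j)_{j=1}^∞ is weakly s-summable in E. -/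
/-!
Put `α_j = ∑_n |y_n^*(T x_j)|^p` and `r = s/p ≥ 1`. Minkowski's inequality in `ℓ^r` gives
`(∑_j α_j^r)^{1/r} ≤ ∑_n (∑_j |(T^* y_n^*)(x_j)|^s)^{p/s} ≤ ‖(x_j)‖_{w,s}^p ∑_n ‖T^* y_n^*‖^p`,
and since `T^*` is `p`-summing with constant `C` the last sum is at most `(C ‖(y_n^*)‖_{w,p})^p`.
Taking the infimum over admissible `C` gives `π_p(T^*)`. The weak norms are finite by the
uniform boundedness principle.
-/

open NormedSpace MeasureTheory

noncomputable section

variable {𝕜 E F : Type*}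

/- Minkowski's inequality in `ℓ^{s/p}`, applied to the columns `n ↦ (a n i ^ p)_i`. -/
theorem Real.rpow_sum_tsum_rpow_le_tsum_sum_rpow {ι : Type*} [Fintype ι] {p s : ℝ} (hp : 0 < p)
    (hps : p ≤ s) {a : ℕ → ι → ℝ} (ha : ∀ n i, 0 ≤ a n i)
    (hsum : Summable fun n => (∑ i, a n i ^ s) ^ (p / s)) :
    (∑ i, (∑' n, a n i ^ p) ^ (s / p)) ^ (1 / s) ≤
      (∑' n, (∑ i, a n i ^ s) ^ (p / s)) ^ (1 / p) := by
  set r := s / p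
  have hr : 1 ≤ r := (one_le_div hp).2 hps
  have : Fact (1 ≤ ENNReal.ofReal r) := ⟨ENNReal.one_le_ofReal.2 hr⟩
  have hr' : (ENNReal.ofReal r).toReal = r := ENNReal.toReal_ofReal (zero_le_one.trans hr)
  let v : ℕ → PiLp (ENNReal.ofReal r) (fun _ : ι => ℝ) := fun n => WithLp.toLp _ fun i => a n i ^ p
  have hnorm (w : PiLp (ENNReal.ofReal r) (fun _ : ι => ℝ)) (hw : ∀ i, 0 ≤ w i) :
      ‖w‖ = (∑ i, w i ^ r) ^ (1 / r) := by
    rw [PiLp.norm_eq_sum (by rw [hr']; positivity), hr']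
    simp only [Real.norm_of_nonneg (hw _)]
  have hv (n : ℕ) : ‖v n‖ = (∑ i, a n i ^ s) ^ (p / s) := by
    rw [hnorm _ fun i => Real.rpow_nonneg (ha n i) p]
    simp only [v, ← Real.rpow_mul (ha _ _), r, mul_div_cancel₀ _ hp.ne', one_div_div]
  have hvsum : Summable v := Summable.of_norm (by simpa only [hv] using hsum)
  have hcoord (i : ι) : (∑' n, v n) i = ∑' n, a n i ^ p :=
    (PiLp.proj (𝕜 := ℝ) (ENNReal.ofReal r) (fun _ : ι => ℝ) i).map_tsum hvsum
  have htriangle := norm_tsum_le_tsum_norm (f := v) (by simpa only [hv] using hsum)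
  rw [hnorm _ fun i => by rw [hcoord]; exact tsum_nonneg fun n => Real.rpow_nonneg (ha n i) p]
    at htriangle
  simp only [hcoord, hv] at htriangle
  have hbase : 0 ≤ ∑ i, (∑' n, a n i ^ p) ^ r :=
    Finset.sum_nonneg fun i _ =>
      Real.rpow_nonneg (tsum_nonneg fun n => Real.rpow_nonneg (ha n i) p) r
  have hroot := Real.rpow_le_rpow (Real.rpow_nonneg hbase _) htriangle (one_div_pos.2 hp).le
  rwa [← Real.rpow_mul hbase, one_div_mul_one_div, div_mul_cancel₀ _ hp.ne'] at hroot

theorem summable_and_rpow_tsum_le_of_forall_fin {f : ℕ → ℝ} {t B : ℝ} (ht : 0 < t)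
    (hf : ∀ n, 0 ≤ f n) (h : ∀ k, (∑ i : Fin k, f i) ^ (1 / t) ≤ B) :
    Summable f ∧ (∑' n, f n) ^ (1 / t) ≤ B := by
  have hB : 0 ≤ B := by simpa [Real.zero_rpow (inv_ne_zero ht.ne')] using h 0
  have hrange (k : ℕ) : ∑ n ∈ Finset.range k, f n ≤ B ^ t := by
    rw [← Fin.sum_univ_eq_sum_range]
    exact (Real.rpow_inv_le_iff_of_pos (Finset.sum_nonneg fun (i : Fin k) _ => hf i) hB ht).1
      (by simpa only [one_div] using h k)
  refine ⟨summable_of_sum_range_le hf hrange, ?_⟩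
  rw [one_div, Real.rpow_inv_le_iff_of_pos (tsum_nonneg hf) hB ht]
  exact Real.tsum_le_of_sum_range_le hf hrange

theorem sum_fin_le_tsum {f : ℕ → ℝ} (hf : ∀ n, 0 ≤ f n) (hsum : Summable f) (k : ℕ) :
    ∑ i : Fin k, f i ≤ ∑' n, f n := by
  rw [Fin.sum_univ_eq_sum_range]
  exact hsum.sum_le_tsum _ fun n _ => hf n

section WeakNorm

variable [RCLike 𝕜] {X : Type*} [NormedAddCommGroup X] [NormedSpace 𝕜 X] {t : ℝ} {x : ℕ → X}

theorem WeaklySummable.bddAbove (ht : 1 ≤ t) (hx : WeaklySummable 𝕜 t x) :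
    BddAbove (Set.range fun φ : {φ : StrongDual 𝕜 X // ‖φ‖ ≤ 1} =>
      (∑' j, ‖φ.1 (x j)‖ ^ t) ^ (1 / t)) := by
  have ht0 : 0 < t := zero_lt_one.trans_le ht
  have : Fact (1 ≤ ENNReal.ofReal t) := ⟨ENNReal.one_le_ofReal.2 ht⟩
  -- Banach–Steinhaus for the truncations `φ ↦ (φ (x n))_{n < k}` into `ℓ^t`.
  let g (k : ℕ) : StrongDual 𝕜 X →L[𝕜] lp (fun _ : ℕ => 𝕜) (ENNReal.ofReal t) :=
    ∑ n ∈ Finset.range k,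
      lp.singleContinuousLinearMap 𝕜 _ _ n ∘L ContinuousLinearMap.apply 𝕜 𝕜 (x n)
  have hg (k : ℕ) (φ : StrongDual 𝕜 X) : ‖g k φ‖ = (∑ i : Fin k, ‖φ (x i)‖ ^ t) ^ (1 / t) := by
    have h := lp.norm_sum_single (by rw [ENNReal.toReal_ofReal ht0.le]; exact ht0)
      (fun n => φ (x n)) (Finset.range k)
    rw [ENNReal.toReal_ofReal ht0.le] at h
    rw [Fin.sum_univ_eq_sum_range (fun n => ‖φ (x n)‖ ^ t), ← h, one_div,
      Real.rpow_rpow_inv (norm_nonneg _) ht0.ne']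
    simp only [g, sum_apply, ContinuousLinearMap.comp_apply,
      ContinuousLinearMap.apply_apply, lp.singleContinuousLinearMap_apply]
  obtain ⟨C, hC⟩ := banach_steinhaus (g := g) fun φ =>
    ⟨(∑' j, ‖φ (x j)‖ ^ t) ^ (1 / t), fun k => by
      rw [hg]
      exact Real.rpow_le_rpow (Finset.sum_nonneg fun i _ => by positivity)
        (sum_fin_le_tsum (fun n => by positivity) (hx φ) k) (by positivity)⟩
  refine ⟨C, ?_⟩
  rintro _ ⟨⟨φ, hφ⟩, rfl⟩
  refine (summable_and_rpow_tsum_le_of_forall_fin ht0 (fun n => by positivity) fun k => ?_).2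
  rw [← hg]
  calc ‖g k φ‖ ≤ ‖g k‖ * ‖φ‖ := (g k).le_opNorm φ
    _ ≤ C * 1 := mul_le_mul (hC k) hφ (norm_nonneg _) ((norm_nonneg _).trans (hC k))
    _ = C := mul_one C

theorem weakNorm_nonneg (t : ℝ) (x : ℕ → X) : 0 ≤ weakNorm 𝕜 t x :=
  Real.iSup_nonneg fun _ => by positivity

theorem WeaklySummable.rpow_sum_le_weakNorm (ht : 1 ≤ t) (hx : WeaklySummable 𝕜 t x)
    {φ : StrongDual 𝕜 X} (hφ : ‖φ‖ ≤ 1) (k : ℕ) :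
    (∑ i : Fin k, ‖φ (x i)‖ ^ t) ^ (1 / t) ≤ weakNorm 𝕜 t x :=
  (Real.rpow_le_rpow (Finset.sum_nonneg fun _ _ => by positivity)
    (sum_fin_le_tsum (fun _ => by positivity) (hx φ) k) (by positivity)).trans
    (le_ciSup (hx.bddAbove ht) ⟨φ, hφ⟩)

theorem WeaklySummable.rpow_sum_le_norm_mul_weakNorm (ht : 1 ≤ t) (hx : WeaklySummable 𝕜 t x)
    (φ : StrongDual 𝕜 X) (k : ℕ) :
    (∑ i : Fin k, ‖φ (x i)‖ ^ t) ^ (1 / t) ≤ ‖φ‖ * weakNorm 𝕜 t x := by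
  have ht0 : 0 < t := zero_lt_one.trans_le ht
  rcases eq_or_ne φ 0 with rfl | hφ
  · simp [Real.zero_rpow ht0.ne', Real.zero_rpow (inv_ne_zero ht0.ne')]
  set ψ : StrongDual 𝕜 X := ((‖φ‖⁻¹ : ℝ) : 𝕜) • φ
  have hψ : ‖ψ‖ ≤ 1 := by
    rw [norm_smul, RCLike.norm_ofReal, abs_inv, abs_norm, inv_mul_cancel₀ (norm_ne_zero_iff.2 hφ)]
  have hφψ (v : X) : ‖φ v‖ = ‖φ‖ * ‖ψ v‖ := by
    rw [FunLike.coe_smul, Pi.smul_apply, norm_smul, RCLike.norm_ofReal, abs_inv, abs_norm,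
      mul_inv_cancel_left₀ (norm_ne_zero_iff.2 hφ)]
  calc (∑ i : Fin k, ‖φ (x i)‖ ^ t) ^ (1 / t)
      = ‖φ‖ * (∑ i : Fin k, ‖ψ (x i)‖ ^ t) ^ (1 / t) := by
        simp_rw [hφψ, Real.mul_rpow (norm_nonneg _) (norm_nonneg _)]
        rw [← Finset.mul_sum,
          Real.mul_rpow (by positivity) (Finset.sum_nonneg fun _ _ => by positivity), one_div,
          Real.rpow_rpow_inv (norm_nonneg _) ht0.ne']
    _ ≤ ‖φ‖ * weakNorm 𝕜 t x := by gcongr; exact hx.rpow_sum_le_weakNorm ht hψ k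

end WeakNorm

def IsSummingConstant (𝕜 : Type*) [RCLike 𝕜] {X Y : Type*} [NormedAddCommGroup X]
    [NormedSpace 𝕜 X] [NormedAddCommGroup Y] [NormedSpace 𝕜 Y] (p : ℝ)
    (u : X →L[𝕜] Y) (C : ℝ) : Prop :=
  ∀ (k : ℕ) (z : Fin k → X),
    (∑ j, ‖u (z j)‖ ^ p) ^ (1 / p) ≤
      C * ⨆ φ : {φ : StrongDual 𝕜 X // ‖φ‖ ≤ 1}, (∑ j, ‖φ.1 (z j)‖ ^ p) ^ (1 / p)

section Summing

variable [RCLike 𝕜] {X Y : Type*} [NormedAddCommGroup X] [NormedSpace 𝕜 X] [NormedAddCommGroup Y]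
  [NormedSpace 𝕜 Y] {p : ℝ} {u : X →L[𝕜] Y}

theorem IsSummingConstant.summable_and_rpow_tsum_le {C : ℝ} (hu : IsSummingConstant 𝕜 p u C)
    (hp : 1 ≤ p) (hC : 0 ≤ C) {x : ℕ → X} (hx : WeaklySummable 𝕜 p x) :
    Summable (fun n => ‖u (x n)‖ ^ p) ∧ (∑' n, ‖u (x n)‖ ^ p) ^ (1 / p) ≤ C * weakNorm 𝕜 p x := by
  have : Nonempty {φ : StrongDual 𝕜 X // ‖φ‖ ≤ 1} := ⟨⟨0, by simp⟩⟩
  refine summable_and_rpow_tsum_le_of_forall_fin (zero_lt_one.trans_le hp)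
    (fun _ => by positivity) fun k => (hu k fun i => x i).trans ?_
  gcongr
  exact ciSup_le fun φ => hx.rpow_sum_le_weakNorm hp φ.2 k

theorem le_piNorm_mul (hu : AbsolutelySumming 𝕜 p u) {a b : ℝ} (hb : 0 ≤ b)
    (h : ∀ C, 0 < C → IsSummingConstant 𝕜 p u C → a ≤ C * b) : a ≤ piNorm 𝕜 p u * b := by
  obtain ⟨C₀, hC₀, hu₀⟩ := hu
  rcases hb.eq_or_lt with rfl | hb
  · simpa using h C₀ hC₀ hu₀
  rw [← div_le_iff₀ hb]
  exact le_csInf ⟨C₀, hC₀, hu₀⟩ fun C ⟨hC, huC⟩ => (div_le_iff₀ hb).2 (h C hC huC)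

end Summing

theorem IsSummingConstant.summable_and_mid_le [RCLike 𝕜] [NormedAddCommGroup E] [NormedSpace 𝕜 E]
    [NormedAddCommGroup F] [NormedSpace 𝕜 F] {p s C : ℝ} (hp : 1 ≤ p) (hps : p ≤ s)
    {T : E →L[𝕜] F} {S : StrongDual 𝕜 F →L[𝕜] StrongDual 𝕜 E}
    (hS : ∀ (φ : StrongDual 𝕜 F) (y : E), S φ y = φ (T y))
    (hSC : IsSummingConstant 𝕜 p S C) (hC : 0 ≤ C) {x : ℕ → E} (hx : WeaklySummable 𝕜 s x)
    {ys : ℕ → StrongDual 𝕜 F} (hys : WeaklySummable 𝕜 p ys) :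
    Summable (fun j => (∑' n, ‖ys n (T (x j))‖ ^ p) ^ (s / p)) ∧
      (∑' j, (∑' n, ‖ys n (T (x j))‖ ^ p) ^ (s / p)) ^ (1 / s) ≤
        C * weakNorm 𝕜 s x * weakNorm 𝕜 p ys := by
  have hp0 : 0 < p := zero_lt_one.trans_le hp
  have hs0 : 0 < s := hp0.trans_le hps
  obtain ⟨hSys, hSys_le⟩ := hSC.summable_and_rpow_tsum_le hp hC hys
  have hcol (k n : ℕ) :
      (∑ j : Fin k, ‖ys n (T (x j))‖ ^ s) ^ (p / s) ≤ ‖S (ys n)‖ ^ p * weakNorm 𝕜 s x ^ p := by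
    have h := hx.rpow_sum_le_norm_mul_weakNorm (hp.trans hps) (S (ys n)) k
    simp only [hS] at h
    rw [← Real.mul_rpow (norm_nonneg _) (weakNorm_nonneg _ _), div_eq_mul_one_div p s, mul_comm p,
      Real.rpow_mul (Finset.sum_nonneg fun _ _ => by positivity)]
    gcongr
  have hdom (k : ℕ) : Summable fun n => (∑ j : Fin k, ‖ys n (T (x j))‖ ^ s) ^ (p / s) :=
    (hSys.mul_right _).of_nonneg_of_le (fun _ => by positivity) (hcol k)
  refine summable_and_rpow_tsum_le_of_forall_fin hs0 (fun _ => by positivity) fun k => ?_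
  calc (∑ j : Fin k, (∑' n, ‖ys n (T (x j))‖ ^ p) ^ (s / p)) ^ (1 / s)
      ≤ (∑' n, (∑ j : Fin k, ‖ys n (T (x j))‖ ^ s) ^ (p / s)) ^ (1 / p) :=
        Real.rpow_sum_tsum_rpow_le_tsum_sum_rpow hp0 hps (fun _ _ => norm_nonneg _) (hdom k)
    _ ≤ (∑' n, ‖S (ys n)‖ ^ p * weakNorm 𝕜 s x ^ p) ^ (1 / p) :=
        Real.rpow_le_rpow (tsum_nonneg fun _ => by positivity)
          ((hdom k).tsum_le_tsum (hcol k) (hSys.mul_right _)) (by positivity)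
    _ = weakNorm 𝕜 s x * (∑' n, ‖S (ys n)‖ ^ p) ^ (1 / p) := by
        rw [tsum_mul_right, Real.mul_rpow (tsum_nonneg fun _ => by positivity)
            (Real.rpow_nonneg (weakNorm_nonneg _ _) _),
          one_div, Real.rpow_rpow_inv (weakNorm_nonneg _ _) hp0.ne', mul_comm]
    _ ≤ C * weakNorm 𝕜 s x * weakNorm 𝕜 p ys := by
        rw [mul_comm C, mul_assoc]
        exact mul_le_mul_of_nonneg_left hSys_le (weakNorm_nonneg _ _)

theorem stmt16_general [RCLike 𝕜] [NormedAddCommGroup E] [NormedSpace 𝕜 E]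
    [NormedAddCommGroup F] [NormedSpace 𝕜 F]
    (p s : ℝ) (hp : 1 ≤ p) (hps : p ≤ s) (T : E →L[𝕜] F)
    (S : StrongDual 𝕜 F →L[𝕜] StrongDual 𝕜 E) (hS : ∀ (φ : StrongDual 𝕜 F) (y : E), S φ y = φ (T y))
    (hSsum : AbsolutelySumming 𝕜 p S) :
    (∀ x : ℕ → E, WeaklySummable 𝕜 s x → ∀ ys : ℕ → StrongDual 𝕜 F, WeaklySummable 𝕜 p ys →
      (∑' j, (∑' n, ‖ys n (T (x j))‖ ^ p) ^ (s / p)) ^ (1 / s) ≤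
        piNorm 𝕜 p S * weakNorm 𝕜 s x * weakNorm 𝕜 p ys) ∧
    (∀ x : ℕ → E, WeaklySummable 𝕜 s x → MidSummable 𝕜 s p fun j => T (x j)) := by
  obtain ⟨C₀, hC₀, hSC₀⟩ : ∃ C > 0, IsSummingConstant 𝕜 p S C := hSsum
  refine ⟨fun x hx ys hys => ?_, fun x hx ys hys =>
    (hSC₀.summable_and_mid_le hp hps hS hC₀.le hx hys).1⟩
  rw [mul_assoc]
  exact le_piNorm_mul ⟨C₀, hC₀, hSC₀⟩ (mul_nonneg (weakNorm_nonneg _ _) (weakNorm_nonneg _ _))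
    fun C hC hSC => (hSC.summable_and_mid_le hp hps hS hC.le hx hys).2.trans_eq (mul_assoc _ _ _)

/-- if `p ≤ s` and the adjoint `T* : F* → E*` of `T` is absolutely `p`-summing,
then `(∑_j (∑_n |y_n^*(T x_j)|^p)^{s/p})^{1/s} ≤ π_p(T*) ‖(x_j)‖_{w,s} ‖(y_n^*)‖_{w,p}`
for all weakly `s`-summable `(x_j)` in `E` and weakly `p`-summable `(y_n^*)` in `F*`;
in particular `(T x_j)_j` is mid `(s,p)`-summable whenever `(x_j)` is weakly `s`-summable. -/
theorem stmt16 [RCLike 𝕜] [NormedAddCommGroup E] [NormedSpace 𝕜 E] [CompleteSpace E]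
    [NormedAddCommGroup F] [NormedSpace 𝕜 F] [CompleteSpace F]
    (p s : ℝ) (hp : 1 ≤ p) (hps : p ≤ s) (T : E →L[𝕜] F)
    (S : StrongDual 𝕜 F →L[𝕜] StrongDual 𝕜 E) (hS : ∀ (φ : StrongDual 𝕜 F) (y : E), S φ y = φ (T y))
    (hSsum : AbsolutelySumming 𝕜 p S) :
    (∀ x : ℕ → E, WeaklySummable 𝕜 s x → ∀ ys : ℕ → StrongDual 𝕜 F, WeaklySummable 𝕜 p ys →
      (∑' j, (∑' n, ‖ys n (T (x j))‖ ^ p) ^ (s / p)) ^ (1 / s) ≤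
        piNorm 𝕜 p S * weakNorm 𝕜 s x * weakNorm 𝕜 p ys) ∧
    (∀ x : ℕ → E, WeaklySummable 𝕜 s x → MidSummable 𝕜 s p fun j => T (x j)) :=
  stmt16_general p s hp hps T S hS hSsum
end
end
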